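/- Let e = (a,b) be a failing edge of an SPT T of G, and let v be a vertex in the detached subtree T_b. Among all swap edges for e incident to v, an edge f = (x,v) minimizing d_T(s,x) + w(f) has max-stretch at most that of any other swap edge for e incident to v; that is, μ(f) ≤ μ(f') for every swap edge f' = (x',v) for e. -/

import Mathlib

open SimpleGraph

/-- The weighted length of a walk. -/
noncomputable def wlen {V : Type*} (W : V → V → ℝ) {G : SimpleGraph V} {u v : V}
    (p : G.Walk u v) : ℝ :=
  (p.darts.map (fun d => W d.toProd.1 d.toProd.2)).sum

/-- The weighted distance between two vertices of a graph: the infimum of the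
weighted lengths of all walks joining them. -/
noncomputable def wdist {V : Type*} (W : V → V → ℝ) (G : SimpleGraph V) (u v : V) : ℝ :=
  sInf {x : ℝ | ∃ p : G.Walk u v, x = wlen W p}

/-- `(x, y)` is a swap edge for the failing tree edge `e = (a,b)` (with `b` the child):
a non-tree edge of `G` whose endpoint `x` lies in the component of `T − e` containing the
source and whose endpoint `y` lies in the detached component, i.e. the one containing `b`. -/
def swapEdge {V : Type*} (T G : SimpleGraph V) (a b x y : V) : Prop :=
  G.Adj x y ∧ Sym2.mk x y ∉ T.edgeSet ∧
    ¬ (T.deleteEdges {Sym2.mk a b}).Reachable b x ∧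
    (T.deleteEdges {Sym2.mk a b}).Reachable b y

/-- The max-stretch `μ` of a swap edge `(x, y)` for the failing edge `e = (a,b)`:
the supremum over the vertices `u` of the detached subtree `T_b` of
`d_{T_{e/f}}(s,u) / d_{G−e}(s,u)`, where `d_{T_{e/f}}(s,u) = d_T(s,x) + w(x,y) + d_T(y,u)`. -/
noncomputable def muSt {V : Type*} (W : V → V → ℝ) (T G : SimpleGraph V)
    (s a b x y : V) : ℝ :=
  sSup {r : ℝ | ∃ u : V, (T.deleteEdges {Sym2.mk a b}).Reachable b u ∧
    r = (wdist W T s x + W x y + wdist W T y u) /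
        wdist W (G.deleteEdges {Sym2.mk a b}) s u}

theorem wdist_nonneg {V : Type*} {W : V → V → ℝ} {G : SimpleGraph V}
    (hW : ∀ u w : V, G.Adj u w → 0 ≤ W u w) (u v : V) : 0 ≤ wdist W G u v := by
  refine Real.sInf_nonneg ?_
  rintro r ⟨p, rfl⟩
  refine List.sum_nonneg ?_
  simp only [List.mem_map]
  rintro _ ⟨d, -, rfl⟩
  exact hW _ _ d.adj

theorem sSup_setOf_le_sSup_setOf {ι : Type*} [Finite ι] {P : ι → Prop} {f g : ι → ℝ}
    (hP : ∃ i, P i) (hfg : ∀ i, P i → f i ≤ g i) :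
    sSup {r : ℝ | ∃ i, P i ∧ r = f i} ≤ sSup {r : ℝ | ∃ i, P i ∧ r = g i} := by
  obtain ⟨i₀, hi₀⟩ := hP
  have hbdd : BddAbove {r : ℝ | ∃ i, P i ∧ r = g i} :=
    (Set.finite_range g).bddAbove.mono fun _ ⟨i, _, hr⟩ => Set.mem_range.2 ⟨i, hr.symm⟩
  refine csSup_le ⟨f i₀, i₀, hi₀, rfl⟩ ?_
  rintro _ ⟨i, hi, rfl⟩
  exact (hfg i hi).trans (le_csSup hbdd ⟨i, hi, rfl⟩)

/-- Only the term `d_T(s,x) + w(x,y)` of each stretch depends on `x`, and every denominator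
`d_{G−e}(s,u)` is nonnegative. -/
theorem muSt_le_muSt_of_le {V : Type*} [Finite V] {W : V → V → ℝ} {T G : SimpleGraph V}
    (hW : ∀ u w : V, G.Adj u w → 0 ≤ W u w) (s a b y : V) {x x' : V}
    (hx : wdist W T s x + W x y ≤ wdist W T s x' + W x' y) :
    muSt W T G s a b x y ≤ muSt W T G s a b x' y := by
  refine sSup_setOf_le_sSup_setOf ⟨b, Reachable.refl b⟩ fun u _ => ?_
  have hden : 0 ≤ wdist W (G.deleteEdges {Sym2.mk a b}) s u :=
    wdist_nonneg (fun u w h => hW u w (deleteEdges_le _ h)) s u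
  gcongr

theorem filtering_best_incident_swap_edge_general {V : Type*} [Fintype V]
    (G T : SimpleGraph V) (W : V → V → ℝ) (s a b v x : V)
    (hWpos : ∀ u w : V, G.Adj u w → 0 < W u w)
    (hmin : ∀ x' : V, swapEdge T G a b x' v →
      wdist W T s x + W x v ≤ wdist W T s x' + W x' v) :
    ∀ x' : V, swapEdge T G a b x' v →
      muSt W T G s a b x v ≤ muSt W T G s a b x' v :=
  fun x' hf' => muSt_le_muSt_of_le (fun u w h => (hWpos u w h).le) s a b v (hmin x' hf')

/-- Let `e = (a,b)` be a failing edge of an SPT `T` of `G`, and let `v` be a vertex in the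
detached subtree `T_b`.  Among all swap edges for `e` incident to `v`, an edge `f = (x,v)`
minimizing `d_T(s,x) + w(f)` has max-stretch at most that of any other swap edge for `e`
incident to `v`: `μ(f) ≤ μ(f')` for every swap edge `f' = (x',v)` for `e`. -/
theorem filtering_best_incident_swap_edge {V : Type*} [Fintype V]
    (G T : SimpleGraph V) (W : V → V → ℝ) (s a b v x : V)
    (hWpos : ∀ u w : V, G.Adj u w → 0 < W u w)
    (hWsymm : ∀ u w : V, W u w = W w u)
    (hTG : T ≤ G) (hT : T.IsTree)
    (hSPT : ∀ u : V, wdist W T s u = wdist W G s u)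
    (he : Sym2.mk a b ∈ T.edgeSet)
    (hb : ¬ (T.deleteEdges {Sym2.mk a b}).Reachable s b)
    (hconn : (G.deleteEdges {Sym2.mk a b}).Connected)
    (hf : swapEdge T G a b x v)
    (hmin : ∀ x' : V, swapEdge T G a b x' v →
      wdist W T s x + W x v ≤ wdist W T s x' + W x' v) :
    ∀ x' : V, swapEdge T G a b x' v →
      muSt W T G s a b x v ≤ muSt W T G s a b x' v :=
  filtering_best_incident_swap_edge_general G T W s a b v x hWpos hmin
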